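/- Let S = k[x,y] with k a field and I = (x³, x²y⁴, xy⁵, y⁷). Then the minimal number of generators μ(Iⁿ) = 3n + 1 for all n ≥ 0, and consequently the Hilbert series of the fiber cone F(I) = ⊕_n Iⁿ/mIⁿ (m = (x,y)) is (1 + 2λ)/(1 - λ)². -/
import Mathlib


open MvPolynomial

noncomputable section

set_option synthInstance.maxHeartbeats 400000
set_option maxHeartbeats 1000000

variable (k : Type) [Field k]

/-- The minimal number of generators `μ(Iⁿ) = dim_k Iⁿ/mIⁿ`, i.e. the dimension of the
degree-`n` piece of the fiber cone `F(I) = ⊕ₙ Iⁿ/mIⁿ`. -/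
def fiberConeDim (S : Type) [CommRing S] [Algebra k S] (m I : Ideal S) (n : ℕ) : ℕ :=
  Module.finrank k
    (↥(I ^ n) ⧸ Submodule.comap (I ^ n).subtype ((m * I ^ n : Ideal S) : Submodule S S))

open Pointwise


def gfun (n i : ℕ) : ℕ :=
  if i = 3 * n then 0 else if i + 1 = 3 * n then 4 else 7 * (n - i / 3) - 2 * (i % 3)

def ee (u v : ℕ) : Fin 2 →₀ ℕ := Finsupp.single 0 u + Finsupp.single 1 v

lemma ee_apply0 (u v : ℕ) : ee u v 0 = u := by simp [ee]
lemma ee_apply1 (u v : ℕ) : ee u v 1 = v := by simp [ee]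
lemma ee_add (u v u' v' : ℕ) : ee u v + ee u' v' = ee (u+u') (v+v') := by
  simp [ee, Finsupp.single_add]; abel
lemma eq_ee_self (s : Fin 2 →₀ ℕ) : s = ee (s 0) (s 1) := by
  ext i; fin_cases i <;> simp [ee_apply0, ee_apply1]
lemma ee_inj {u v u' v' : ℕ} : ee u v = ee u' v' ↔ u = u' ∧ v = v' := by
  constructor
  · intro h
    exact ⟨by rw [← ee_apply0 u v, h, ee_apply0], by rw [← ee_apply1 u v, h, ee_apply1]⟩
  · rintro ⟨rfl, rfl⟩; rfl
lemma ee_le_iff {u v : ℕ} {s : Fin 2 →₀ ℕ} : ee u v ≤ s ↔ u ≤ s 0 ∧ v ≤ s 1 := by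
  rw [Finsupp.le_def]
  constructor
  · intro h; exact ⟨by simpa [ee_apply0] using h 0, by simpa [ee_apply1] using h 1⟩
  · rintro ⟨h0, h1⟩ i; fin_cases i <;> simpa [ee_apply0, ee_apply1]

def Eset (n : ℕ) : Set (Fin 2 →₀ ℕ) :=
  {s | ∃ a b c d, a+b+c+d = n ∧ s = ee (3*a+2*b+c) (4*b+5*c+7*d)}

def Mset : Set (Fin 2 →₀ ℕ) := {ee 1 0, ee 0 1}

lemma Eset_add (n : ℕ) : Eset n + Eset 1 = Eset (n+1) := by
  ext s
  constructor
  · rintro ⟨t, ⟨a,b,c,d,hs,rfl⟩, t', ⟨a',b',c',d',hs',rfl⟩, rfl⟩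
    exact ⟨a+a', b+b', c+c', d+d', by omega, by simp only [ee_add, ee_inj]; omega⟩
  · rintro ⟨a,b,c,d,hs,rfl⟩
    rcases show (1 ≤ a) ∨ (1 ≤ b) ∨ (1 ≤ c) ∨ (1 ≤ d) by omega with h|h|h|h
    · exact ⟨ee (3*(a-1)+2*b+c) (4*b+5*c+7*d), ⟨a-1,b,c,d, by omega, rfl⟩,
        ee 3 0, ⟨1,0,0,0, by omega, by rw [ee_inj]; omega⟩,
        by simp only [ee_add, ee_inj]; omega⟩
    · exact ⟨ee (3*a+2*(b-1)+c) (4*(b-1)+5*c+7*d), ⟨a,b-1,c,d, by omega, rfl⟩,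
        ee 2 4, ⟨0,1,0,0, by omega, by rw [ee_inj]; omega⟩,
        by simp only [ee_add, ee_inj]; omega⟩
    · exact ⟨ee (3*a+2*b+(c-1)) (4*b+5*(c-1)+7*d), ⟨a,b,c-1,d, by omega, rfl⟩,
        ee 1 5, ⟨0,0,1,0, by omega, by rw [ee_inj]; omega⟩,
        by simp only [ee_add, ee_inj]; omega⟩
    · exact ⟨ee (3*a+2*b+c) (4*b+5*c+7*(d-1)), ⟨a,b,c,d-1, by omega, rfl⟩,
        ee 0 7, ⟨0,0,0,1, by omega, by rw [ee_inj]; omega⟩,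
        by simp only [ee_add, ee_inj]; omega⟩

def mon : (Fin 2 →₀ ℕ) → MvPolynomial (Fin 2) k := fun s => monomial s (1:k)

lemma mon_image_mul (A B : Set (Fin 2 →₀ ℕ)) :
    (mon k '' A) * (mon k '' B) = mon k '' (A + B) := by
  ext p
  constructor
  · rintro ⟨-, ⟨a, ha, rfl⟩, -, ⟨b, hb, rfl⟩, rfl⟩
    exact ⟨a + b, ⟨a, ha, b, hb, rfl⟩, by simp [mon, monomial_mul]⟩
  · rintro ⟨-, ⟨a, ha, b, hb, rfl⟩, rfl⟩
    exact ⟨mon k a, ⟨a, ha, rfl⟩, mon k b, ⟨b, hb, rfl⟩, by simp [mon, monomial_mul]⟩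

lemma Eset_zero : Eset 0 = {0} := by
  ext s
  constructor
  · rintro ⟨a,b,c,d,hs,rfl⟩
    have ha : a = 0 := by omega
    have hb : b = 0 := by omega
    have hc : c = 0 := by omega
    have hd : d = 0 := by omega
    subst ha hb hc hd
    simp [ee]
  · rintro rfl
    exact ⟨0,0,0,0, by omega, by simp [ee]⟩

lemma span_pow (n : ℕ) :
    (Ideal.span (mon k '' Eset 1)) ^ n = Ideal.span (mon k '' Eset n) := by
  induction n with
  | zero =>
    rw [pow_zero, Eset_zero]
    simp [mon, Ideal.span_singleton_one]
  | succ n ih =>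
    rw [pow_succ, ih, Ideal.span_mul_span', mon_image_mul, Eset_add]

lemma Eset_one : Eset 1 = {ee 3 0, ee 2 4, ee 1 5, ee 0 7} := by
  ext s
  constructor
  · rintro ⟨a,b,c,d,hs,rfl⟩
    rcases show (a=1∧b=0∧c=0∧d=0)∨(a=0∧b=1∧c=0∧d=0)∨(a=0∧b=0∧c=1∧d=0)∨(a=0∧b=0∧c=0∧d=1)
      by omega with ⟨rfl,rfl,rfl,rfl⟩|⟨rfl,rfl,rfl,rfl⟩|⟨rfl,rfl,rfl,rfl⟩|⟨rfl,rfl,rfl,rfl⟩ <;>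
      simp [Set.mem_insert_iff, ee_inj]
  · intro hs
    rcases hs with rfl | rfl | rfl | rfl
    · exact ⟨1,0,0,0, by omega, by rw [ee_inj]; omega⟩
    · exact ⟨0,1,0,0, by omega, by rw [ee_inj]; omega⟩
    · exact ⟨0,0,1,0, by omega, by rw [ee_inj]; omega⟩
    · exact ⟨0,0,0,1, by omega, by rw [ee_inj]; omega⟩

lemma gens_eq : ({X 0 ^ 3, X 0 ^ 2 * X 1 ^ 4, X 0 * X 1 ^ 5, X 1 ^ 7} :
    Set (MvPolynomial (Fin 2) k)) = mon k '' Eset 1 := by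
  rw [Eset_one]
  have h1 : (X 0 ^ 3 : MvPolynomial (Fin 2) k) = mon k (ee 3 0) := by
    simp [mon, ee, X_pow_eq_monomial]
  have h2 : (X 0 ^ 2 * X 1 ^ 4 : MvPolynomial (Fin 2) k) = mon k (ee 2 4) := by
    simp [mon, ee, X_pow_eq_monomial, monomial_mul]
  have h3 : (X 0 * X 1 ^ 5 : MvPolynomial (Fin 2) k) = mon k (ee 1 5) := by
    rw [show (X 0 : MvPolynomial (Fin 2) k) = monomial (Finsupp.single 0 1) 1 from rfl,
      X_pow_eq_monomial, monomial_mul, one_mul]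
    rfl
  have h4 : (X 1 ^ 7 : MvPolynomial (Fin 2) k) = mon k (ee 0 7) := by
    simp [mon, ee, X_pow_eq_monomial]
  rw [h1, h2, h3, h4]
  simp [Set.image_insert_eq]

lemma mgens_eq : ({X 0, X 1} : Set (MvPolynomial (Fin 2) k)) = mon k '' Mset := by
  have h1 : (X 0 : MvPolynomial (Fin 2) k) = mon k (ee 1 0) := by
    simp [mon, ee, X]
  have h2 : (X 1 : MvPolynomial (Fin 2) k) = mon k (ee 0 1) := by
    simp [mon, ee, X]
  rw [h1, h2, Mset]
  simp [Set.image_insert_eq]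

lemma mem_span_mon {A : Set (Fin 2 →₀ ℕ)} {f : MvPolynomial (Fin 2) k} :
    f ∈ Ideal.span (mon k '' A) ↔ ∀ s ∈ f.support, ∃ t ∈ A, t ≤ s := by
  unfold mon
  exact mem_ideal_span_monomial_image

lemma mem_MIset {n : ℕ} {t : Fin 2 →₀ ℕ} : t ∈ Mset + Eset n ↔
    ∃ a b c d p q, a+b+c+d = n ∧ p+q = 1 ∧ t = ee (3*a+2*b+c+p) (4*b+5*c+7*d+q) := by
  constructor
  · rintro ⟨u, hu, e, ⟨a,b,c,d,h,rfl⟩, rfl⟩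
    rcases hu with rfl | rfl
    · exact ⟨a,b,c,d,1,0, h, by omega, by simp only [ee_add, ee_inj]; omega⟩
    · exact ⟨a,b,c,d,0,1, h, by omega, by simp only [ee_add, ee_inj]; omega⟩
  · rintro ⟨a,b,c,d,p,q,h,hpq,rfl⟩
    rcases show (p = 1 ∧ q = 0) ∨ (p = 0 ∧ q = 1) by omega with ⟨rfl, rfl⟩ | ⟨rfl, rfl⟩
    · exact ⟨ee 1 0, Or.inl rfl, ee (3*a+2*b+c) (4*b+5*c+7*d), ⟨a,b,c,d,h,rfl⟩,
        by simp only [ee_add, ee_inj]; omega⟩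
    · exact ⟨ee 0 1, Or.inr rfl, ee (3*a+2*b+c) (4*b+5*c+7*d), ⟨a,b,c,d,h,rfl⟩,
        by simp only [ee_add, ee_inj]; omega⟩


lemma lemB {n a b c d i : ℕ} (h : a + b + c + d = n) (h1 : 3*a+2*b+c ≤ i)
    (h2 : 4*b+5*c+7*d ≤ gfun n i) (h3 : i ≤ 3*n) :
    3*a+2*b+c = i ∧ 4*b+5*c+7*d = gfun n i := by
  unfold gfun at *
  split_ifs at * <;> cases b <;> cases c <;> cases d <;> omega

lemma lemA {n a b c d u v : ℕ} (h : a + b + c + d = n) (h1 : 3*a+2*b+c ≤ u)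
    (h2 : 4*b+5*c+7*d ≤ v) (hne : ∀ i ≤ 3*n, ¬(u = i ∧ v = gfun n i)) :
    ∃ a' b' c' d', a'+b'+c'+d' = n ∧ 3*a'+2*b'+c' ≤ u ∧ 4*b'+5*c'+7*d' ≤ v ∧
      (3*a'+2*b'+c' < u ∨ 4*b'+5*c'+7*d' < v) := by
  rcases le_or_gt (3*n) u with hu | hu
  · exact ⟨n, 0, 0, 0, by omega, by omega, by omega, by
      have := hne (3*n) le_rfl; unfold gfun at this
      split_ifs at this <;> cases b <;> cases c <;> cases d <;> omega⟩
  rcases eq_or_lt_of_le (show u + 1 ≤ 3*n by omega) with hu2 | hu2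
  · refine ⟨n-1, 1, 0, 0, by omega, by omega, ?_, ?_⟩
    · have := hne u (by omega); unfold gfun at this
      split_ifs at this <;> cases b <;> cases c <;> cases d <;> omega
    · have := hne u (by omega); unfold gfun at this
      split_ifs at this <;> cases b <;> cases c <;> cases d <;> omega
  · refine ⟨u/3, 0, u%3, n - u/3 - u%3, by omega, by omega, ?_, ?_⟩
    · have := hne u (by omega); unfold gfun at this
      split_ifs at this <;> cases b <;> cases c <;> cases d <;> omega
    · have := hne u (by omega); unfold gfun at this
      split_ifs at this <;> cases b <;> cases c <;> cases d <;> omega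

lemma lemF1 {n i : ℕ} (h : i ≤ 3*n) :
    ∃ a b c d, a+b+c+d = n ∧ 3*a+2*b+c = i ∧ 4*b+5*c+7*d = gfun n i := by
  rcases eq_or_lt_of_le h with h1 | h1
  · exact ⟨n, 0, 0, 0, by omega, by omega, by unfold gfun; split_ifs <;> omega⟩
  rcases eq_or_lt_of_le (show i + 1 ≤ 3*n by omega) with h2 | h2
  · exact ⟨n-1, 1, 0, 0, by omega, by omega, by unfold gfun; split_ifs <;> omega⟩
  · exact ⟨i/3, 0, i%3, n - i/3 - i%3, by omega, by omega, by unfold gfun; split_ifs <;> omega⟩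

set_option maxHeartbeats 1000000 in
lemma main_dim (n : ℕ) (J MJ : Ideal (MvPolynomial (Fin 2) k))
    (hJ : J = Ideal.span (mon k '' Eset n))
    (hMJ : MJ = Ideal.span (mon k '' (Mset + Eset n))) :
    Module.finrank k (↥J ⧸ Submodule.comap J.subtype
      (MJ : Submodule (MvPolynomial (Fin 2) k) (MvPolynomial (Fin 2) k))) = 3 * n + 1 := by
  subst hJ hMJ
  set R := MvPolynomial (Fin 2) k
  set J : Ideal R := Ideal.span (mon k '' Eset n) with hJdef
  set MJ : Ideal R := Ideal.span (mon k '' (Mset + Eset n)) with hMJdef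
  set φ : ↥J →ₗ[k] (Fin (3*n+1) → k) :=
    LinearMap.pi fun i => (lcoeff k (ee (i:ℕ) (gfun n (i:ℕ)))).comp
      ((Submodule.subtype J).restrictScalars k) with hφ
  have hφval : ∀ (f : ↥J) (i : Fin (3*n+1)), φ f i = coeff (ee (i:ℕ) (gfun n (i:ℕ))) (f : R) := by
    intro f i
    simp [hφ]
  have hsurj : Function.Surjective φ := by
    intro w
    have hmem : (∑ i : Fin (3*n+1), w i • mon k (ee (i:ℕ) (gfun n (i:ℕ)))) ∈ J := by
      refine Submodule.sum_mem _ fun i _ => Submodule.smul_of_tower_mem _ _ ?_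
      refine Ideal.subset_span ⟨ee (i:ℕ) (gfun n (i:ℕ)), ?_, rfl⟩
      obtain ⟨a,b,c,d,h1,h2,h3⟩ := lemF1 (show (i:ℕ) ≤ 3*n by omega)
      exact ⟨a,b,c,d,h1, by rw [ee_inj]; omega⟩
    refine ⟨⟨_, hmem⟩, ?_⟩
    funext j
    rw [hφval]
    show coeff _ (∑ i : Fin (3*n+1), w i • mon k (ee (i:ℕ) (gfun n (i:ℕ)))) = w j
    rw [MvPolynomial.coeff_sum, Finset.sum_eq_single j]
    · simp [coeff_smul, mon, coeff_monomial]
    · intro i _ hij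
      have hne : ¬ (ee (i:ℕ) (gfun n (i:ℕ)) = ee (j:ℕ) (gfun n (j:ℕ))) := by
        rw [ee_inj]
        rintro ⟨h1, -⟩
        exact hij (Fin.ext h1)
      simp [coeff_smul, mon, coeff_monomial, hne]
    · simp
  have hker : LinearMap.ker φ =
      (Submodule.comap J.subtype (MJ : Submodule R R)).restrictScalars k := by
    ext f
    simp only [LinearMap.mem_ker, Submodule.restrictScalars_mem, Submodule.mem_comap,
      Submodule.coe_subtype]
    constructor
    · intro h0
      show (f : R) ∈ MJ
      rw [hMJdef, mem_span_mon]
      intro s hs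
      obtain ⟨t, ⟨a,b,c,d,hsum,rfl⟩, hts⟩ := (mem_span_mon k).mp f.2 s hs
      rw [ee_le_iff] at hts
      have hne : ∀ i ≤ 3*n, ¬(s 0 = i ∧ s 1 = gfun n i) := by
        rintro i hi ⟨h1, h2⟩
        have hsee : s = ee i (gfun n i) := by
          rw [eq_ee_self s, h1, h2]
        have hc0 : coeff s (f : R) = 0 := by
          have h4 := congrFun h0 (⟨i, by omega⟩ : Fin (3*n+1))
          rw [hφval] at h4
          rw [hsee]
          simpa using h4
        exact (mem_support_iff.mp hs) hc0
      obtain ⟨a',b',c',d',hsum',hle1,hle2,hstrict⟩ := lemA hsum hts.1 hts.2 hne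
      rcases hstrict with hst | hst
      · refine ⟨ee (3*a'+2*b'+c'+1) (4*b'+5*c'+7*d'),
          mem_MIset.mpr ⟨a',b',c',d',1,0, hsum', by omega, by rw [ee_inj]; omega⟩, ?_⟩
        rw [ee_le_iff]
        omega
      · refine ⟨ee (3*a'+2*b'+c') (4*b'+5*c'+7*d'+1),
          mem_MIset.mpr ⟨a',b',c',d',0,1, hsum', by omega, by rw [ee_inj]; omega⟩, ?_⟩
        rw [ee_le_iff]
        omega
    · intro hmem
      funext i
      rw [hφval]
      show coeff (ee (i:ℕ) (gfun n (i:ℕ))) (f : R) = 0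
      by_contra hc
      have hs : ee (i:ℕ) (gfun n (i:ℕ)) ∈ (f : R).support := mem_support_iff.mpr hc
      obtain ⟨t, htA, hts⟩ := (mem_span_mon k).mp hmem _ hs
      obtain ⟨a,b,c,d,p,q,hsum,hpq,rfl⟩ := mem_MIset.mp htA
      rw [ee_le_iff, ee_apply0, ee_apply1] at hts
      have hB := lemB hsum (show 3*a+2*b+c ≤ (i:ℕ) by omega)
        (show 4*b+5*c+7*d ≤ gfun n (i:ℕ) by omega) (show (i:ℕ) ≤ 3*n by omega)
      omega
  have e1 := Submodule.Quotient.restrictScalarsEquiv k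
    (Submodule.comap J.subtype (MJ : Submodule R R))
  have e2 : (↥J ⧸ LinearMap.ker φ) ≃ₗ[k] (Fin (3*n+1) → k) :=
    φ.quotKerEquivOfSurjective hsurj
  calc Module.finrank k (↥J ⧸ Submodule.comap J.subtype (MJ : Submodule R R))
      = Module.finrank k (↥J ⧸ (Submodule.comap J.subtype
          (MJ : Submodule R R)).restrictScalars k) := (e1.finrank_eq).symm
    _ = Module.finrank k (↥J ⧸ LinearMap.ker φ) := by rw [hker]
    _ = Module.finrank k (Fin (3*n+1) → k) := e2.finrank_eq
    _ = 3*n+1 := Module.finrank_fin_fun k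


lemma ps_lemma (f : ℕ → ℤ) (hf : ∀ n, f n = 3*n+1) :
    (PowerSeries.mk f) * (1 - PowerSeries.X) ^ 2 = 1 + 2 * PowerSeries.X := by
  have hdistr : (PowerSeries.mk f) * (1 - PowerSeries.X) ^ 2 =
      PowerSeries.mk f - (PowerSeries.mk f * PowerSeries.X) -
      (PowerSeries.mk f * PowerSeries.X) +
      (PowerSeries.mk f * PowerSeries.X) * PowerSeries.X := by ring
  have hrhs : (1 + 2 * PowerSeries.X : PowerSeries ℤ) =
      1 + (PowerSeries.X + PowerSeries.X) := by ring
  rw [hdistr, hrhs]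
  ext n
  rcases n with _ | n
  · simp [hf]
  rcases n with _ | n
  · simp [PowerSeries.coeff_succ_mul_X, hf]
  · simp [PowerSeries.coeff_succ_mul_X, hf, PowerSeries.coeff_one]
    rw [PowerSeries.coeff_X, if_neg (by omega)]
    ring

/-- For `I = (x³, x²y⁴, xy⁵, y⁷) ⊆ k[x,y]`, one has `μ(Iⁿ) = 3n + 1` for all `n ≥ 0`,
and consequently the Hilbert series of the fiber cone `F(I) = ⊕ₙ Iⁿ/mIⁿ` is
`(1 + 2λ)/(1 - λ)²`. -/
theorem fiber_cone_hilbert_series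
    (x y : MvPolynomial (Fin 2) k) (hx : x = X 0) (hy : y = X 1)
    (I : Ideal (MvPolynomial (Fin 2) k))
    (hI : I = Ideal.span {x ^ 3, x ^ 2 * y ^ 4, x * y ^ 5, y ^ 7})
    (m : Ideal (MvPolynomial (Fin 2) k)) (hm : m = Ideal.span {x, y}) :
    (∀ n : ℕ, fiberConeDim k (MvPolynomial (Fin 2) k) m I n = 3 * n + 1) ∧
    (PowerSeries.mk fun n => (fiberConeDim k (MvPolynomial (Fin 2) k) m I n : ℤ)) *
        (1 - PowerSeries.X) ^ 2 = 1 + 2 * PowerSeries.X := by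
  subst hx hy hI hm
  have hI1 : Ideal.span {(X 0:MvPolynomial (Fin 2) k) ^ 3, X 0 ^ 2 * X 1 ^ 4,
      X 0 * X 1 ^ 5, X 1 ^ 7} = Ideal.span (mon k '' Eset 1) := by
    rw [gens_eq]
  have hm1 : Ideal.span {(X 0:MvPolynomial (Fin 2) k), X 1} = Ideal.span (mon k '' Mset) := by
    rw [mgens_eq]
  have hfirst : ∀ n : ℕ, fiberConeDim k (MvPolynomial (Fin 2) k)
      (Ideal.span {X 0, X 1})
      (Ideal.span {(X 0:MvPolynomial (Fin 2) k) ^ 3, X 0 ^ 2 * X 1 ^ 4,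
        X 0 * X 1 ^ 5, X 1 ^ 7}) n = 3 * n + 1 := by
    intro n
    have hJ : (Ideal.span {(X 0:MvPolynomial (Fin 2) k) ^ 3, X 0 ^ 2 * X 1 ^ 4,
        X 0 * X 1 ^ 5, X 1 ^ 7}) ^ n = Ideal.span (mon k '' Eset n) := by
      rw [hI1, span_pow]
    have hMJ : Ideal.span {(X 0:MvPolynomial (Fin 2) k), X 1} *
        (Ideal.span {(X 0:MvPolynomial (Fin 2) k) ^ 3, X 0 ^ 2 * X 1 ^ 4,
          X 0 * X 1 ^ 5, X 1 ^ 7}) ^ n = Ideal.span (mon k '' (Mset + Eset n)) := by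
      rw [hJ, hm1, Ideal.span_mul_span', mon_image_mul]
    exact main_dim k n _ _ hJ hMJ
  refine ⟨hfirst, ?_⟩
  refine ps_lemma _ fun n => ?_
  rw [hfirst n]
  push_cast
  ring

end
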